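/- arXiv:2505.13071 — 6 statements merged into one kernel-verified Lean document; each statement's English description precedes it below -/
import Mathlib

section
/- Theorem 1 (lossless global distance reconstruction). Let F be a field, let α : Fin (l+t) → F be injective interpolation nodes, and let β : Fin m → F be injective encoding points whose range is disjoint from the range of α, with m ≥ 2l + 2t − 1. For any two segment families x, y : Fin (l+t) → (Fin r → F), let h ∈ F[X] be the Lagrange interpolation polynomial of degree ≤ m − 1 through the m points (β j, dis(f_x(β j), f_y(β j))) for j ∈ Fin m, i.e. h(γ) = Σ_{j ∈ Fin m} dis(f_x(β j), f_y(β j)) · ∏_{j' ≠ j} (γ − β j')/(β j − β j'). Then Σ_{o < l} h(α o) = Σ_{o < l} dis(x o, y o); that is, summing the interpolated distance polynomial over the l data nodes exactly recovers the squared distance between the concatenated data vectors, irrespective of how the segments are distributed. -/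
/-- Lagrange encoding of a segment family `x : Fin N → (Fin r → F)` at point `γ`. -/
noncomputable def enc {F : Type*} [Field F] {N r : ℕ} (α : Fin N → F)
    (x : Fin N → Fin r → F) (γ : F) : Fin r → F :=
  ∑ o, (∏ o' ∈ Finset.univ.erase o, (γ - α o') / (α o - α o')) • x o

/-- Squared distance between two vectors. -/
def dis {F : Type*} [Field F] {r : ℕ} (u v : Fin r → F) : F :=
  ∑ k, (u k - v k) ^ 2

open Polynomial Finset

lemma eval_lagrange_basis {F : Type*} [Field F] {N : ℕ} (α : Fin N → F) (o : Fin N) (γ : F) :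
    eval γ (Lagrange.basis Finset.univ α o) =
      ∏ o' ∈ Finset.univ.erase o, (γ - α o') / (α o - α o') := by
  rw [Lagrange.basis, eval_prod]
  refine Finset.prod_congr rfl fun j hj => ?_
  rw [Lagrange.basisDivisor]
  simp [div_eq_inv_mul, mul_comm]

lemma enc_eq_eval {F : Type*} [Field F] {N r : ℕ} (α : Fin N → F)
    (x : Fin N → Fin r → F) (γ : F) (k : Fin r) :
    enc α x γ k = eval γ (Lagrange.interpolate Finset.univ α (fun o => x o k)) := by
  rw [enc, Lagrange.interpolate_apply, eval_finset_sum]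
  simp only [Finset.sum_apply, Pi.smul_apply, smul_eq_mul, eval_mul, eval_C,
    eval_lagrange_basis]
  exact Finset.sum_congr rfl fun o _ => by ring

/-- Theorem 1 (lossless global distance reconstruction). -/
theorem lossless_distance_reconstruction
    {F : Type*} [Field F] {l t r m : ℕ}
    (hl : 1 ≤ l) (ht : 1 ≤ t) (hr : 1 ≤ r)
    (α : Fin (l + t) → F) (hα : Function.Injective α)
    (β : Fin m → F) (hβ : Function.Injective β)
    (hdisj : Disjoint (Set.range α) (Set.range β))
    (hm : 2 * l + 2 * t - 1 ≤ m)
    (x y : Fin (l + t) → Fin r → F)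
    (h : F → F)
    (hh : ∀ γ : F, h γ = ∑ j, dis (enc α x (β j)) (enc α y (β j)) *
        ∏ j' ∈ Finset.univ.erase j, (γ - β j') / (β j - β j')) :
    ∑ o : Fin l, h (α (Fin.castAdd t o)) =
      ∑ o : Fin l, dis (x (Fin.castAdd t o)) (y (Fin.castAdd t o)) := by
  classical
  have hαi : Set.InjOn α (Finset.univ : Finset (Fin (l+t))) := hα.injOn
  have hβi : Set.InjOn β (Finset.univ : Finset (Fin m)) := hβ.injOn
  -- the distance polynomial
  set D : F[X] := ∑ k : Fin r,
      (Lagrange.interpolate Finset.univ α (fun o => x o k) -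
       Lagrange.interpolate Finset.univ α (fun o => y o k)) ^ 2 with hD
  have hevalD : ∀ γ : F, eval γ D = dis (enc α x γ) (enc α y γ) := by
    intro γ
    rw [hD, eval_finset_sum, dis]
    refine Finset.sum_congr rfl fun k _ => ?_
    rw [enc_eq_eval, enc_eq_eval]
    simp
  -- degree bound
  have hdegD : D.degree < (m : WithBot ℕ) := by
    refine lt_of_le_of_lt (degree_sum_le _ _) ?_
    rw [Finset.sup_lt_iff (by exact_mod_cast WithBot.bot_lt_coe m)]
    intro k _
    have h1 : (Lagrange.interpolate Finset.univ α (fun o => x o k) -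
        Lagrange.interpolate Finset.univ α (fun o => y o k)).degree ≤ ((l + t - 1 : ℕ) : WithBot ℕ) := by
      refine le_trans (degree_sub_le _ _) ?_
      apply max_le
      · simpa using Lagrange.degree_interpolate_le _ hαi
      · simpa using Lagrange.degree_interpolate_le _ hαi
    calc ((Lagrange.interpolate Finset.univ α (fun o => x o k) -
        Lagrange.interpolate Finset.univ α (fun o => y o k)) ^ 2).degree
        ≤ ((l + t - 1 : ℕ) : WithBot ℕ) + ((l + t - 1 : ℕ) : WithBot ℕ) := by
          rw [pow_two]
          exact le_trans (degree_mul_le _ _) (add_le_add h1 h1)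
      _ = (((l + t - 1) + (l + t - 1) : ℕ) : WithBot ℕ) := by push_cast; ring
      _ < (m : WithBot ℕ) := by
          have : (l + t - 1) + (l + t - 1) < m := by omega
          exact_mod_cast this
  -- h agrees with eval of D
  have key : ∀ γ : F, h γ = eval γ D := by
    have hDinterp : Lagrange.interpolate Finset.univ β (fun j => eval (β j) D) = D :=
      (Lagrange.eq_interpolate (f := D) hβi (by simpa using hdegD)).symm
    intro γ
    rw [hh γ, ← hDinterp, Lagrange.interpolate_apply, eval_finset_sum]
    refine Finset.sum_congr rfl fun j _ => ?_
    rw [eval_mul, eval_C, eval_lagrange_basis, hevalD]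
  refine Finset.sum_congr rfl fun o _ => ?_
  rw [key, hevalD, dis, dis]
  refine Finset.sum_congr rfl fun k _ => ?_
  rw [enc_eq_eval, enc_eq_eval,
    Lagrange.eval_interpolate_at_node _ hαi (Finset.mem_univ _),
    Lagrange.eval_interpolate_at_node _ hαi (Finset.mem_univ _)]
end

section
/- Let β : Fin m → F be injective with m ≥ 2l + 2t − 1. For any two segment families x, y : Fin (l+t) → (Fin r → F) and every γ ∈ F, the Lagrange interpolation formula through the m encoded pairwise distances reproduces the encoded distance function everywhere: Σ_{j ∈ Fin m} dis(f_x(β j), f_y(β j)) · ∏_{j' ≠ j} (γ − β j')/(β j − β j') = dis(f_x(γ), f_y(γ)). (The polynomial interpolated from the m shared distances coincides with the squared-difference polynomial of the two encodings at every point.) -/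
open Polynomial Finset

/-- With `m ≥ 2l + 2t − 1` encoding points, the Lagrange interpolation formula through the
`m` encoded pairwise distances reproduces the encoded distance function everywhere. -/
theorem interpolated_distances_agree_everywhere
    {F : Type*} [Field F] {l t r m : ℕ}
    (hl : 1 ≤ l) (ht : 1 ≤ t) (hr : 1 ≤ r)
    (α : Fin (l + t) → F) (hα : Function.Injective α)
    (β : Fin m → F) (hβ : Function.Injective β)
    (hm : 2 * l + 2 * t - 1 ≤ m)
    (x y : Fin (l + t) → Fin r → F) (γ : F) :
    ∑ j, dis (enc α x (β j)) (enc α y (β j)) *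
        ∏ j' ∈ Finset.univ.erase j, (γ - β j') / (β j - β j') =
      dis (enc α x γ) (enc α y γ) := by
  -- the polynomial whose evaluation is the distance function
  set L : Fin (l + t) → F[X] := fun o =>
    ∏ o' ∈ Finset.univ.erase o, (C (α o - α o')⁻¹ * (X - C (α o'))) with hL
  set q : Fin r → F[X] := fun k => ∑ o, L o * C (x o k - y o k) with hq
  set p : F[X] := ∑ k, (q k) ^ 2 with hp
  have hLeval : ∀ (ξ : F) (o : Fin (l + t)),
      (L o).eval ξ = ∏ o' ∈ Finset.univ.erase o, (ξ - α o') / (α o - α o') := by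
    intro ξ o
    rw [hL, eval_prod]
    refine Finset.prod_congr rfl fun o' _ => ?_
    simp [div_eq_mul_inv, mul_comm]
  have hpeval : ∀ ξ : F, p.eval ξ = dis (enc α x ξ) (enc α y ξ) := by
    intro ξ
    rw [hp, eval_finset_sum]
    refine Finset.sum_congr rfl fun k _ => ?_
    have : (q k).eval ξ = enc α x ξ k - enc α y ξ k := by
      rw [hq]
      simp only [eval_finset_sum, eval_mul, eval_C, hLeval ξ]
      simp only [enc, Finset.sum_apply, Pi.smul_apply, smul_eq_mul, ← Finset.sum_sub_distrib,
        mul_sub]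
    simp [this]
  -- degree bound
  have hLdeg : ∀ o, (L o).natDegree ≤ l + t - 1 := by
    intro o
    rw [hL]
    calc (∏ o' ∈ Finset.univ.erase o, (C (α o - α o')⁻¹ * (X - C (α o')))).natDegree
        ≤ ∑ o' ∈ Finset.univ.erase o,
            (C (α o - α o')⁻¹ * (X - C (α o'))).natDegree := natDegree_prod_le _ _
      _ ≤ ∑ _o' ∈ Finset.univ.erase o, 1 := by
          refine Finset.sum_le_sum fun o' _ => ?_
          calc (C (α o - α o')⁻¹ * (X - C (α o'))).natDegree
              ≤ (C (α o - α o')⁻¹).natDegree + (X - C (α o')).natDegree := natDegree_mul_le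
            _ ≤ 0 + 1 := by
                gcongr
                · exact le_of_eq (natDegree_C _)
                · exact natDegree_X_sub_C_le _
            _ = 1 := by ring
      _ = (Finset.univ.erase o).card := by simp
      _ = l + t - 1 := by simp [Finset.card_erase_of_mem]
  have hqdeg : ∀ k, (q k).natDegree ≤ l + t - 1 := by
    intro k
    refine natDegree_sum_le_of_forall_le _ _ fun o _ => ?_
    calc (L o * C (x o k - y o k)).natDegree
        ≤ (L o).natDegree + (C (x o k - y o k)).natDegree := natDegree_mul_le
      _ ≤ (l + t - 1) + 0 := by gcongr; exacts [hLdeg o, le_of_eq (natDegree_C _)]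
      _ = l + t - 1 := by ring
  have hpdeg : p.natDegree ≤ 2 * (l + t - 1) := by
    refine natDegree_sum_le_of_forall_le _ _ fun k _ => ?_
    calc (q k ^ 2).natDegree ≤ 2 * (q k).natDegree := natDegree_pow_le
      _ ≤ 2 * (l + t - 1) := by gcongr; exact hqdeg k
  have hNpos : 1 ≤ l + t := le_trans hl (Nat.le_add_right l t)
  have hlt : 2 * (l + t - 1) < m := by omega
  have hdeglt : p.degree < (Finset.univ : Finset (Fin m)).card := by
    refine lt_of_le_of_lt (degree_le_natDegree) ?_
    rw [Finset.card_univ, Fintype.card_fin]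
    exact_mod_cast lt_of_le_of_lt hpdeg hlt
  have hinj : Set.InjOn β (Finset.univ : Finset (Fin m)) := hβ.injOn
  have hinterp := Lagrange.eq_interpolate (f := p) hinj hdeglt
  have key := congrArg (Polynomial.eval γ) hinterp
  rw [← hpeval γ, key, Lagrange.interpolate_apply, eval_finset_sum]
  refine Finset.sum_congr rfl fun j _ => ?_
  rw [eval_mul, eval_C, hpeval (β j)]
  congr 1
  rw [Lagrange.basis, eval_prod]
  refine Finset.prod_congr rfl fun j' _ => ?_
  simp [Lagrange.basisDivisor, div_eq_mul_inv, mul_comm]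
end

section
/- (Privacy core: invertibility of the noise-block Lagrange evaluation matrix.) Let F be a field, let α : Fin (l+t) → F be injective, and let γ : Fin t → F be injective with range disjoint from the range of α. Then the t × t matrix M over F defined by M j o = ∏_{o' ∈ Fin (l+t), o' ≠ (l+o)} (γ j − α o')/(α (l+o) − α o') (the Lagrange basis polynomial associated with the noise node α (l+o), evaluated at the point γ j) is invertible. -/
/-- Privacy core: the `t × t` matrix of Lagrange basis polynomials associated with the
noise nodes, evaluated at points outside the node set, is invertible. -/
theorem noise_block_matrix_invertible
    {F : Type*} [Field F] {l t : ℕ}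
    (hl : 1 ≤ l) (ht : 1 ≤ t)
    (α : Fin (l + t) → F) (hα : Function.Injective α)
    (γ : Fin t → F) (hγ : Function.Injective γ)
    (hdisj : Disjoint (Set.range γ) (Set.range α)) :
    IsUnit (Matrix.of fun (j o : Fin t) =>
      ∏ o' ∈ Finset.univ.erase (Fin.natAdd l o),
        (γ j - α o') / (α (Fin.natAdd l o) - α o')) := by
  classical
  set M : Matrix (Fin t) (Fin t) F := Matrix.of fun (j o : Fin t) =>
      ∏ o' ∈ Finset.univ.erase (Fin.natAdd l o),
        (γ j - α o') / (α (Fin.natAdd l o) - α o') with hM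
  -- relate entries to Lagrange basis evals
  have hMeval : ∀ j o, M j o =
      (Lagrange.basis Finset.univ α (Fin.natAdd l o)).eval (γ j) := by
    intro j o
    rw [hM, Matrix.of_apply, Lagrange.basis, Polynomial.eval_prod]
    exact Finset.prod_congr rfl fun o' _ => by
      simp [Lagrange.basisDivisor, div_eq_inv_mul, mul_comm]
  rw [Matrix.isUnit_iff_isUnit_det, isUnit_iff_ne_zero]
  intro hdet
  obtain ⟨v, hv, hMv⟩ := (Matrix.exists_mulVec_eq_zero_iff (M := M)).2 hdet
  set p : Polynomial F :=
    ∑ o : Fin t, Polynomial.C (v o) * Lagrange.basis Finset.univ α (Fin.natAdd l o) with hp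
  have hαinj : Set.InjOn α (Finset.univ : Finset (Fin (l + t))) := hα.injOn
  -- p vanishes at all γ j and all α (castAdd t i)
  have hevalγ : ∀ j : Fin t, p.eval (γ j) = 0 := by
    intro j
    have := congrFun hMv j
    simpa [p, Polynomial.eval_finset_sum, hMeval, Matrix.mulVec, dotProduct,
      mul_comm] using this
  have hevalα : ∀ i : Fin l, p.eval (α (Fin.castAdd t i)) = 0 := by
    intro i
    have : ∀ o : Fin t,
        (Lagrange.basis Finset.univ α (Fin.natAdd l o)).eval (α (Fin.castAdd t i)) = 0 := by
      intro o
      refine Lagrange.eval_basis_of_ne ?_ (Finset.mem_univ _)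
      intro h
      have := congrArg (Fin.val) h
      simp [Fin.natAdd, Fin.castAdd, Fin.castLE] at this
      omega
    simp [p, Polynomial.eval_finset_sum, this]
  -- combine the evaluation points
  set f : Fin l ⊕ Fin t → F := Sum.elim (fun i => α (Fin.castAdd t i)) γ with hf
  have hfinj : Function.Injective f := by
    rintro (i | j) (i' | j') hxy <;>
      simp only [hf, Sum.elim_inl, Sum.elim_inr] at hxy
    · have h1 := hα hxy
      have h2 := congrArg Fin.val h1
      simp [Fin.castAdd, Fin.castLE] at h2
      exact congrArg Sum.inl (Fin.ext h2)
    · exact (Set.disjoint_left.1 hdisj (Set.mem_range_self j') ⟨_, hxy⟩).elim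
    · exact (Set.disjoint_left.1 hdisj (Set.mem_range_self j) ⟨_, hxy.symm⟩).elim
    · exact congrArg Sum.inr (hγ hxy)
  have hdeg : p.natDegree < Fintype.card (Fin l ⊕ Fin t) := by
    have hcard : Fintype.card (Fin l ⊕ Fin t) = l + t := by simp
    rw [hcard]
    refine lt_of_le_of_lt (Polynomial.natDegree_sum_le _ _) ?_
    rw [Finset.fold_max_lt]
    constructor
    · omega
    · intro o _
      refine lt_of_le_of_lt (Polynomial.natDegree_C_mul_le _ _) ?_
      rw [Lagrange.natDegree_basis hαinj (Finset.mem_univ _)]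
      simp only [Finset.card_univ, Fintype.card_fin]
      omega
  have hp0 : p = 0 := by
    refine Polynomial.eq_zero_of_natDegree_lt_card_of_eval_eq_zero p hfinj ?_ hdeg
    rintro (i | j)
    · exact hevalα i
    · exact hevalγ j
  -- evaluate at noise nodes to get v = 0
  apply hv
  funext o
  have : p.eval (α (Fin.natAdd l o)) = v o := by
    rw [hp, Polynomial.eval_finset_sum]
    rw [Finset.sum_eq_single o]
    · simp [Lagrange.eval_basis_self hαinj (Finset.mem_univ _)]
    · intro o' _ ho'
      have hne : Fin.natAdd l o' ≠ Fin.natAdd l o := by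
        intro h
        apply ho'
        have := congrArg Fin.val h
        simp [Fin.natAdd] at this
        exact Fin.ext this
      simp [Lagrange.eval_basis_of_ne hne (Finset.mem_univ _)]
    · intro h; exact absurd (Finset.mem_univ o) h
  rw [hp0] at this
  simpa using this.symm
end

section
/- (Privacy core: evaluation isomorphism on the noise subspace.) Let F be a field, let α : Fin (l+t) → F be injective, and let γ : Fin t → F be injective with range disjoint from the range of α. Let V be the F-subspace of F[X] consisting of polynomials q of degree at most l + t − 1 satisfying q(α o) = 0 for every o < l. Then the F-linear evaluation map V → (Fin t → F), q ↦ (q(γ j))_{j ∈ Fin t}, is bijective. -/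
/-!
A polynomial of degree `< l + t` vanishing at the `l` nodes and at the `t` points `γ j` has
`l + t` distinct roots, so it is zero: evaluation is injective. Conversely, if `Z` is the nodal
polynomial of the `l` nodes, which does not vanish at any `γ j`, then `Z` times the Lagrange
interpolant of `v j / Z(γ j)` at the `γ j` lies in the subspace and takes the values `v`.
-/

open Polynomial

namespace Polynomial

variable {F : Type*} [Field F] {ι κ : Type*}

noncomputable def noiseSubspace (n : ℕ) (a : ι → F) : Submodule F F[X] :=
  degreeLT F n ⊓ ⨅ i, LinearMap.ker (leval (a i))

theorem mem_noiseSubspace {n : ℕ} {a : ι → F} {q : F[X]} :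
    q ∈ noiseSubspace n a ↔ q.degree < n ∧ ∀ i, q.eval (a i) = 0 := by
  simp [noiseSubspace, Submodule.mem_iInf, mem_degreeLT]

variable [Fintype ι] [Fintype κ] {a : ι → F} {b : κ → F}

theorem eq_zero_of_mem_noiseSubspace_of_eval_eq_zero (ha : a.Injective) (hb : b.Injective)
    (hab : ∀ i j, a i ≠ b j) {q : F[X]}
    (hq : q ∈ noiseSubspace (Fintype.card ι + Fintype.card κ) a) (hqb : ∀ j, q.eval (b j) = 0) :
    q = 0 := by
  rw [mem_noiseSubspace, ← Fintype.card_sum] at hq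
  refine eq_zero_of_degree_lt_of_eval_index_eq_zero (v := Sum.elim a b) Finset.univ
    (ha.sumElim hb hab).injOn hq.1 ?_
  rintro (i | j) -
  exacts [hq.2 i, hqb j]

theorem exists_mem_noiseSubspace_eval_eq (hb : b.Injective) (hab : ∀ i j, a i ≠ b j)
    (r : κ → F) :
    ∃ q ∈ noiseSubspace (Fintype.card ι + Fintype.card κ) a, ∀ j, q.eval (b j) = r j := by
  classical
  set Z := Lagrange.nodal Finset.univ a
  refine ⟨Z * Lagrange.interpolate Finset.univ b (fun j => r j / Z.eval (b j)),
    mem_noiseSubspace.mpr ⟨?_, fun i => ?_⟩, fun j => ?_⟩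
  · rw [degree_mul, Lagrange.degree_nodal, Nat.cast_add]
    exact WithBot.add_lt_add_left (WithBot.natCast_ne_bot _)
      (Lagrange.degree_interpolate_lt _ hb.injOn)
  · rw [eval_mul, Lagrange.eval_nodal_at_node (Finset.mem_univ i), zero_mul]
  · rw [eval_mul, Lagrange.eval_interpolate_at_node _ hb.injOn (Finset.mem_univ j),
      mul_div_cancel₀ _ (Lagrange.eval_nodal_not_at_node fun i _ => (hab i j).symm)]

theorem bijective_eval_noiseSubspace (ha : a.Injective) (hb : b.Injective)
    (hab : ∀ i j, a i ≠ b j) :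
    Function.Bijective fun (q : noiseSubspace (Fintype.card ι + Fintype.card κ) a) (j : κ) =>
      (q : F[X]).eval (b j) := by
  refine ⟨fun q₁ q₂ h => ?_, fun r => ?_⟩
  · rw [← sub_eq_zero, ← Subtype.coe_inj]
    exact eq_zero_of_mem_noiseSubspace_of_eval_eq_zero ha hb hab (q₁ - q₂).2 fun j => by
      simpa [sub_eq_zero] using congrFun h j
  · obtain ⟨q, hq, hqb⟩ := exists_mem_noiseSubspace_eval_eq hb hab r
    exact ⟨⟨q, hq⟩, _root_.funext hqb⟩

end Polynomial

theorem evaluation_bijective_on_noise_subspace_general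
    {F : Type*} [Field F] {l t : ℕ}
    (hl : 1 ≤ l)
    (α : Fin (l + t) → F) (hα : Function.Injective α)
    (γ : Fin t → F) (hγ : Function.Injective γ)
    (hdisj : Disjoint (Set.range γ) (Set.range α)) :
    Function.Bijective
      (fun (q : (Polynomial.degreeLE F ((l + t - 1 : ℕ) : WithBot ℕ) ⊓
          ⨅ o : Fin l, LinearMap.ker (Polynomial.leval (α (Fin.castAdd t o))) :
            Submodule F (Polynomial F)))
        (j : Fin t) => Polynomial.eval (γ j) (q : Polynomial F)) := by
  have hdeg : degreeLE F ((l + t - 1 : ℕ) : WithBot ℕ) =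
      degreeLT F (Fintype.card (Fin l) + Fintype.card (Fin t)) := by
    rw [Fintype.card_fin, Fintype.card_fin, ← degreeLT_succ_eq_degreeLE]
    congr 1
    omega
  have hαγ : ∀ o j, α (Fin.castAdd t o) ≠ γ j := fun o j =>
    (Set.disjoint_range_iff.mp hdisj j (Fin.castAdd t o)).symm
  rw [hdeg]
  exact bijective_eval_noiseSubspace (hα.comp (Fin.castAdd_injective l t)) hγ hαγ

/-- Privacy core: evaluation at the `t` collusion points is a bijection from the space of
polynomials of degree at most `l + t − 1` vanishing at the first `l` nodes onto `Fin t → F`. -/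
theorem evaluation_bijective_on_noise_subspace
    {F : Type*} [Field F] {l t : ℕ}
    (hl : 1 ≤ l) (ht : 1 ≤ t)
    (α : Fin (l + t) → F) (hα : Function.Injective α)
    (γ : Fin t → F) (hγ : Function.Injective γ)
    (hdisj : Disjoint (Set.range γ) (Set.range α)) :
    Function.Bijective
      (fun (q : (Polynomial.degreeLE F ((l + t - 1 : ℕ) : WithBot ℕ) ⊓
          ⨅ o : Fin l, LinearMap.ker (Polynomial.leval (α (Fin.castAdd t o))) :
            Submodule F (Polynomial F)))
        (j : Fin t) => Polynomial.eval (γ j) (q : Polynomial F)) :=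
  evaluation_bijective_on_noise_subspace_general hl α hα γ hγ hdisj
end

section
/- (Bijectivity of the noise-to-shares map.) Let F be a field, α : Fin (l+t) → F injective, and γ : Fin t → F injective with range disjoint from the range of α. Fix data segments s : Fin l → (Fin r → F). For noise segments n : Fin t → (Fin r → F), let x_{s,n} : Fin (l+t) → (Fin r → F) be the segment family whose first l entries are s and last t entries are n. Then the map (Fin t → (Fin r → F)) → (Fin t → (Fin r → F)) sending n to the tuple of encoded shares (f_{x_{s,n}}(γ j))_{j ∈ Fin t} is a bijection. -/
/-!
Coordinatewise, the shares are values of the polynomial `P` of degree `< l + t` interpolating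
the segment family at the nodes `α`. Such a polynomial is equally determined by its values at
the `l + t` distinct points `α 0, …, α (l-1), γ 0, …, γ (t-1)`, where the first `l` values
are the fixed data. So the noise is recovered from the shares by interpolating (data, shares)
at these points and evaluating at the noise nodes `α l, …, α (l+t-1)`: this is the inverse.
-/

open Polynomial Lagrange Finset Function

lemma injective_sumElim_castAdd {X : Type*} {l t : ℕ} {α : Fin (l + t) → X} {γ : Fin t → X}
    (hα : Injective α) (hγ : Injective γ)
    (hdisj : Disjoint (Set.range γ) (Set.range α)) :
    Injective (Sum.elim (α ∘ Fin.castAdd t) γ) :=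
  (hα.comp (Fin.castAdd_injective l t)).sumElim hγ fun _ j h =>
    Set.disjoint_left.mp hdisj ⟨j, h.symm⟩ ⟨_, rfl⟩

section
variable {F : Type*} [Field F]

lemma enc_apply {N r : ℕ} (α : Fin N → F) (x : Fin N → Fin r → F) (z : F) (k : Fin r) :
    enc α x z k = (interpolate univ α fun o => x o k).eval z := by
  simp only [enc, interpolate_apply, eval_finsetSum, Finset.sum_apply, Pi.smul_apply,
    smul_eq_mul, eval_mul, eval_C, Lagrange.basis, eval_prod, basisDivisor, eval_sub, eval_X]
  refine Finset.sum_congr rfl fun o _ => ?_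
  rw [mul_comm]
  congr 1
  exact Finset.prod_congr rfl fun _ _ => div_eq_inv_mul _ _

lemma interpolate_eval_interpolate {ι κ : Type*} [Fintype ι] [Fintype κ] [DecidableEq ι]
    [DecidableEq κ] {v : ι → F} (hv : Injective v) {u : κ → F} (hu : Injective u)
    (hcard : Fintype.card ι ≤ Fintype.card κ) (w : ι → F) :
    interpolate univ u (fun k => (interpolate univ v w).eval (u k)) = interpolate univ v w := by
  refine (eq_interpolate hu.injOn ?_).symm
  calc (interpolate univ v w).degree < #(univ : Finset ι) := degree_interpolate_lt w hv.injOn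
    _ ≤ #(univ : Finset κ) := by exact_mod_cast hcard

variable {l t r : ℕ} (α : Fin (l + t) → F) (γ : Fin t → F) (s : Fin l → Fin r → F)

noncomputable def noiseOfShares (y : Fin t → Fin r → F) : Fin t → Fin r → F := fun i k =>
  (interpolate univ (Sum.elim (α ∘ Fin.castAdd t) γ) (Sum.elim (s · k) (y · k))).eval
    (α (Fin.natAdd l i))

variable {α γ}

lemma noiseOfShares_shares (hα : Injective α) (hαγ : Injective (Sum.elim (α ∘ Fin.castAdd t) γ))
    (n : Fin t → Fin r → F) :
    noiseOfShares α γ s (fun j => enc α (Fin.append s n) (γ j)) = n := by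
  funext i k
  set P := interpolate univ α fun o => Fin.append s n o k
  have hshares : Sum.elim (s · k) (fun j => enc α (Fin.append s n) (γ j) k) =
      fun b => P.eval (Sum.elim (α ∘ Fin.castAdd t) γ b) := by
    funext b
    rcases b with i | j
    · show s i k = P.eval (α (Fin.castAdd t i))
      rw [eval_interpolate_at_node _ hα.injOn (mem_univ _), Fin.append_left]
    · exact enc_apply α _ (γ j) k
  rw [noiseOfShares, hshares, interpolate_eval_interpolate hα hαγ (by simp),
    eval_interpolate_at_node _ hα.injOn (mem_univ _), Fin.append_right]

lemma shares_noiseOfShares (hα : Injective α) (hαγ : Injective (Sum.elim (α ∘ Fin.castAdd t) γ))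
    (y : Fin t → Fin r → F) :
    (fun j => enc α (Fin.append s (noiseOfShares α γ s y)) (γ j)) = y := by
  funext j k
  set Q := interpolate univ (Sum.elim (α ∘ Fin.castAdd t) γ) (Sum.elim (s · k) (y · k))
  have hsegments : (fun o => Fin.append s (noiseOfShares α γ s y) o k) = fun o => Q.eval (α o) := by
    funext o
    induction o using Fin.addCases with
    | left i =>
      rw [Fin.append_left]
      exact (eval_interpolate_at_node (Sum.elim (s · k) (y · k)) hαγ.injOn (mem_univ (.inl i))).symm
    | right i => rw [Fin.append_right, noiseOfShares]
  rw [enc_apply, hsegments, interpolate_eval_interpolate hαγ hα (by simp)]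
  exact eval_interpolate_at_node _ hαγ.injOn (mem_univ (.inr j))

end

theorem noise_to_shares_bijective_general
    {F : Type*} [Field F] {l t r : ℕ}
    (α : Fin (l + t) → F) (hα : Function.Injective α)
    (γ : Fin t → F) (hγ : Function.Injective γ)
    (hdisj : Disjoint (Set.range γ) (Set.range α))
    (s : Fin l → Fin r → F) :
    Function.Bijective
      (fun (n : Fin t → Fin r → F) (j : Fin t) => enc α (Fin.append s n) (γ j)) := by
  have hαγ := injective_sumElim_castAdd hα hγ hdisj
  exact bijective_iff_has_inverse.mpr
    ⟨noiseOfShares α γ s, noiseOfShares_shares s hα hαγ, shares_noiseOfShares s hα hαγ⟩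

/-- Bijectivity of the noise-to-shares map: fixing the data segments `s`, the map sending
the noise segments to the tuple of encoded shares at the `t` collusion points is a bijection. -/
theorem noise_to_shares_bijective
    {F : Type*} [Field F] {l t r : ℕ}
    (hl : 1 ≤ l) (ht : 1 ≤ t) (hr : 1 ≤ r)
    (α : Fin (l + t) → F) (hα : Function.Injective α)
    (γ : Fin t → F) (hγ : Function.Injective γ)
    (hdisj : Disjoint (Set.range γ) (Set.range α))
    (s : Fin l → Fin r → F) :
    Function.Bijective
      (fun (n : Fin t → Fin r → F) (j : Fin t) => enc α (Fin.append s n) (γ j)) :=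
  noise_to_shares_bijective_general α hα γ hγ hdisj s
end

section
/- (End-to-end exactness of OmniFC distance reconstruction for integer data.) Let p be an odd prime and F = ZMod p. Let α : Fin (l+t) → F be injective and β : Fin m → F be injective with range disjoint from the range of α, and suppose m ≥ 2l + 2t − 1. Let s, s' : Fin l → (Fin r → ℤ) be integer data segments whose total squared distance D = Σ_{o < l} Σ_{k ∈ Fin r} (s o k − s' o k)² satisfies D < (p−1)/2. Let x, y : Fin (l+t) → (Fin r → F) be any segment families whose first l entries are the mod-p reductions of s and s' respectively (their last t noise entries arbitrary). Let h ∈ F[X] be the Lagrange interpolation polynomial of degree ≤ m − 1 through the points (β j, dis(f_x(β j), f_y(β j))) for j ∈ Fin m. Then (Σ_{o < l} h(α o)).val = D; that is, the server's decoded reconstruction exactly equals the true integer squared distance between the concatenated data vectors. -/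
/-!
Each coordinate of the Lagrange encoding `γ ↦ enc α x γ` is a polynomial of degree `< l + t`,
so `γ ↦ dis (enc α x γ) (enc α y γ)` is a polynomial of degree `≤ 2 (l + t - 1) < m`. The
server's `m` evaluations at the `β j` therefore determine it, and `h` is this polynomial. At a
data node `α o` the encodings return the segments themselves, so `∑ o, h (α o)` is the integer
distance `D` reduced mod `p`; since `0 ≤ D < p`, `val` recovers `D`.
-/

open Polynomial Finset

namespace Lagrange

theorem eval_interpolate_univ {F : Type*} [Field F] {N : ℕ} (v c : Fin N → F) (γ : F) :
    (interpolate univ v c).eval γ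
      = ∑ o, c o * ∏ o' ∈ univ.erase o, (γ - v o') / (v o - v o') := by
  simp only [interpolate_apply, eval_finsetSum, eval_mul, eval_C, Lagrange.basis, eval_prod,
    basisDivisor, eval_sub, eval_X, div_eq_mul_inv, mul_comm]

end Lagrange

section Encoding

variable {F : Type*} [Field F] {N r : ℕ} (α : Fin N → F) (x y : Fin N → Fin r → F)

theorem enc_apply_eq_eval_interpolate (γ : F) (k : Fin r) :
    enc α x γ k = (Lagrange.interpolate univ α fun o => x o k).eval γ := by
  simp only [Lagrange.eval_interpolate_univ, enc, Finset.sum_apply, Pi.smul_apply, smul_eq_mul,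
    mul_comm]

noncomputable def disPoly : F[X] :=
  ∑ k, (Lagrange.interpolate univ α (fun o => x o k)
    - Lagrange.interpolate univ α (fun o => y o k)) ^ 2

theorem eval_disPoly (γ : F) : (disPoly α x y).eval γ = dis (enc α x γ) (enc α y γ) := by
  simp only [disPoly, dis, eval_finsetSum, eval_pow, eval_sub, enc_apply_eq_eval_interpolate]

variable {α}

theorem enc_node (hα : Function.Injective α) (o : Fin N) : enc α x (α o) = x o := by
  funext k
  rw [enc_apply_eq_eval_interpolate]
  exact Lagrange.eval_interpolate_at_node _ hα.injOn (mem_univ o)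

theorem natDegree_disPoly_le (hα : Function.Injective α) :
    (disPoly α x y).natDegree ≤ 2 * (N - 1) := by
  have hinterp : ∀ c : Fin N → F, (Lagrange.interpolate univ α c).natDegree ≤ N - 1 :=
    fun c => natDegree_le_iff_degree_le.mpr <| by
      simpa using Lagrange.degree_interpolate_le c hα.injOn (s := univ)
  refine natDegree_sum_le_of_forall_le _ _ fun k _ => natDegree_pow_le.trans ?_
  exact Nat.mul_le_mul_left 2 <| (natDegree_sub_le _ _).trans (max_le (hinterp _) (hinterp _))

theorem degree_disPoly_lt (hα : Function.Injective α) :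
    (disPoly α x y).degree < ↑(2 * N - 1) := by
  rcases N.eq_zero_or_pos with rfl | hN
  · simp [disPoly]
  · exact degree_le_natDegree.trans_lt <| by
      exact_mod_cast (natDegree_disPoly_le x y hα).trans_lt (by omega)

theorem sum_dis_enc_mul_basis_eq_dis_enc {m : ℕ} (hα : Function.Injective α) {β : Fin m → F}
    (hβ : Function.Injective β) (hm : 2 * N - 1 ≤ m) (γ : F) :
    ∑ j, dis (enc α x (β j)) (enc α y (β j)) * ∏ j' ∈ univ.erase j, (γ - β j') / (β j - β j')
      = dis (enc α x γ) (enc α y γ) := by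
  have hdeg : (disPoly α x y).degree < #(univ : Finset (Fin m)) := by
    rw [card_univ, Fintype.card_fin]
    exact (degree_disPoly_lt x y hα).trans_le (by exact_mod_cast hm)
  simp only [← eval_disPoly, ← Lagrange.eval_interpolate_univ,
    ← Lagrange.eq_interpolate hβ.injOn hdeg]

end Encoding

theorem ZMod.val_intCast_of_nonneg_of_lt {n : ℕ} [NeZero n] {a : ℤ} (h0 : 0 ≤ a) (h : a < n) :
    ((a : ZMod n).val : ℤ) = a := by
  rw [ZMod.val_intCast, Int.emod_eq_of_lt h0 h]

theorem omniFC_end_to_end_exactness_general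
    {p : ℕ} [Fact p.Prime] {l t r m : ℕ}
    (α : Fin (l + t) → ZMod p) (hα : Function.Injective α)
    (β : Fin m → ZMod p) (hβ : Function.Injective β)
    (hm : 2 * l + 2 * t - 1 ≤ m)
    (s s' : Fin l → Fin r → ℤ)
    (hD : ∑ o : Fin l, ∑ k, (s o k - s' o k) ^ 2 < (((p - 1) / 2 : ℕ) : ℤ))
    (x y : Fin (l + t) → Fin r → ZMod p)
    (hx : ∀ o : Fin l, x (Fin.castAdd t o) = fun k => ((s o k : ZMod p)))
    (hy : ∀ o : Fin l, y (Fin.castAdd t o) = fun k => ((s' o k : ZMod p)))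
    (h : ZMod p → ZMod p)
    (hh : ∀ γ : ZMod p, h γ = ∑ j, dis (enc α x (β j)) (enc α y (β j)) *
        ∏ j' ∈ Finset.univ.erase j, (γ - β j') / (β j - β j')) :
    (((∑ o : Fin l, h (α (Fin.castAdd t o))).val : ℤ)) =
      ∑ o : Fin l, ∑ k, (s o k - s' o k) ^ 2 := by
  have hnode : ∀ o : Fin l,
      h (α (Fin.castAdd t o)) = ((∑ k, (s o k - s' o k) ^ 2 : ℤ) : ZMod p) := by
    intro o
    rw [hh, sum_dis_enc_mul_basis_eq_dis_enc x y hα hβ (by omega), enc_node x hα, enc_node y hα,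
      hx, hy]
    simp only [dis, Int.cast_sum, Int.cast_pow, Int.cast_sub]
  rw [sum_congr rfl fun o _ => hnode o, ← Int.cast_sum]
  exact ZMod.val_intCast_of_nonneg_of_lt (by positivity) (by omega)

/-- End-to-end exactness of OmniFC distance reconstruction for integer data: the server's
decoded reconstruction equals the true integer squared distance between the concatenated
data vectors. -/
theorem omniFC_end_to_end_exactness
    {p : ℕ} [Fact p.Prime] (hodd : Odd p) {l t r m : ℕ}
    (hl : 1 ≤ l) (ht : 1 ≤ t) (hr : 1 ≤ r)
    (α : Fin (l + t) → ZMod p) (hα : Function.Injective α)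
    (β : Fin m → ZMod p) (hβ : Function.Injective β)
    (hdisj : Disjoint (Set.range β) (Set.range α))
    (hm : 2 * l + 2 * t - 1 ≤ m)
    (s s' : Fin l → Fin r → ℤ)
    (hD : ∑ o : Fin l, ∑ k, (s o k - s' o k) ^ 2 < (((p - 1) / 2 : ℕ) : ℤ))
    (x y : Fin (l + t) → Fin r → ZMod p)
    (hx : ∀ o : Fin l, x (Fin.castAdd t o) = fun k => ((s o k : ZMod p)))
    (hy : ∀ o : Fin l, y (Fin.castAdd t o) = fun k => ((s' o k : ZMod p)))
    (h : ZMod p → ZMod p)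
    (hh : ∀ γ : ZMod p, h γ = ∑ j, dis (enc α x (β j)) (enc α y (β j)) *
        ∏ j' ∈ Finset.univ.erase j, (γ - β j') / (β j - β j')) :
    (((∑ o : Fin l, h (α (Fin.castAdd t o))).val : ℤ)) =
      ∑ o : Fin l, ∑ k, (s o k - s' o k) ^ 2 :=
  omniFC_end_to_end_exactness_general α hα β hβ hm s s' hD x y hx hy h hh
end
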